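/- Let $\kappa, \theta, p$ be as in the LJD positivity assumptions: $\kappa$ has non-positive off-diagonal entries, $\kappa\theta \geq 0$ componentwise, $p = (p_0,\ldots,p_d) \in [0,\infty)^{1+d}$ with $p_1,\ldots,p_k > 0$ and $p_{k+1}=\cdots=p_d=0$, $1 \le k \le d$. Define the linear drift matrix $G_1 = \begin{pmatrix} 0 & 0 \\ \kappa\theta & -\kappa \end{pmatrix}$ acting on $H_1(x) = (1, x_1, \ldots, x_d)^\top$. Then for $\beta \in \mathbb{R}$, $p^\top(\beta\,\mathrm{Id} + G_1)H_1(x) \geq 0$ for all $x \in (0,\infty)^d$ if and only if $\beta \geq \max\{\tilde p^\top\kappa_1/p_1, \ldots, \tilde p^\top\kappa_k/p_k\}$ when $p_0 = 0$, and $\beta \geq \max\{-\tilde p^\top\kappa\theta/p_0,\, \tilde p^\top\kappa_1/p_1, \ldots, \tilde p^\top\kappa_k/p_k\}$ when $p_0 > 0$. -/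

import Mathlib

/-
Expanding `H₁(x) = (1, x)`, the rate `pᵀ(β Id + G₁)H₁(x)` is affine in `x`, with constant term
`β p₀ + p̃ᵀκθ` and `j`-th coefficient `β p_j - p̃ᵀκ_j`. An affine function is non-negative on the
open orthant iff its constant term and all its coefficients are. For `j ≥ k` the coefficient is
automatically non-negative, because `p_j = 0` leaves only off-diagonal entries of `κ`, which are
non-positive; for `j < k` it is the bound `β ≥ p̃ᵀκ_j / p_j`. The constant term is automatically
non-negative when `p₀ = 0` (as `κθ ≥ 0`) and gives `β ≥ -p̃ᵀκθ / p₀` otherwise.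
-/

open scoped Matrix
open Filter Topology

lemma nonneg_and_nonneg_of_forall_pos_add_mul_nonneg {a b : ℝ} (h : ∀ t > 0, 0 ≤ a + t * b) :
    0 ≤ a ∧ 0 ≤ b := by
  constructor
  · have hlim : Tendsto (fun t => a + t * b) (𝓝[>] 0) (𝓝 a) := by
      refine ((continuous_const.add (continuous_id.mul continuous_const)).tendsto' 0 a ?_).mono_left
        nhdsWithin_le_nhds
      simp
    exact ge_of_tendsto hlim (eventually_nhdsWithin_of_forall h)
  · have hlim : Tendsto (fun t => a * t⁻¹ + b) atTop (𝓝 b) := by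
      simpa using (tendsto_inv_atTop_zero.const_mul a).add_const b
    refine ge_of_tendsto hlim ((eventually_gt_atTop 0).mono fun t ht => ?_)
    have hdiv : a * t⁻¹ + b = (a + t * b) / t := by field_simp
    exact hdiv ▸ div_nonneg (h t ht) ht.le

lemma forall_pos_nonneg_add_dotProduct_iff {ι : Type*} [Fintype ι] (A : ℝ) (c : ι → ℝ) :
    (∀ x : ι → ℝ, (∀ i, 0 < x i) → 0 ≤ A + c ⬝ᵥ x) ↔ 0 ≤ A ∧ ∀ j, 0 ≤ c j := by
  classical
  refine ⟨fun h => ⟨?_, fun j => ?_⟩, fun ⟨hA, hc⟩ x hx => ?_⟩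
  · refine (nonneg_and_nonneg_of_forall_pos_add_mul_nonneg (b := c ⬝ᵥ 1) fun t ht => ?_).1
    simpa [dotProduct_smul] using h (t • 1) fun _ => by simpa using ht
  · refine (nonneg_and_nonneg_of_forall_pos_add_mul_nonneg (a := A + c ⬝ᵥ 1) fun t ht => ?_).2
    have hx : ∀ i, 0 < (1 + t • Pi.single j (1 : ℝ) : ι → ℝ) i := fun i => by
      have hsingle : (0 : ι → ℝ) ≤ Pi.single j 1 := Pi.single_nonneg.2 zero_le_one
      simp only [Pi.add_apply, Pi.smul_apply, Pi.one_apply, smul_eq_mul]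
      linarith [mul_nonneg ht.le (hsingle i)]
    simpa [dotProduct_add, dotProduct_smul, dotProduct_single, add_assoc, mul_comm]
      using h _ hx
  · exact add_nonneg hA (Finset.sum_nonneg fun j _ => mul_nonneg (hc j) (hx j).le)

lemma dotProduct_finCons {R : Type*} [CommSemiring R] {d : ℕ} (p : Fin (d + 1) → R) (a : R)
    (x : Fin d → R) : p ⬝ᵥ Fin.cons a x = p 0 * a + Fin.tail p ⬝ᵥ x :=
  Matrix.dotProduct_cons p a x

lemma dotProduct_linearDrift_mulVec {R : Type*} [CommRing R] {d : ℕ}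
    (κ : Matrix (Fin d) (Fin d) R) (θ : Fin d → R) (p : Fin (d + 1) → R) (x : Fin d → R) :
    p ⬝ᵥ (Matrix.of (Fin.cons (fun _ => (0 : R))
      (fun i : Fin d => Fin.cons ((κ *ᵥ θ) i) (fun j : Fin d => -κ i j)))) *ᵥ Fin.cons 1 x
      = Fin.tail p ⬝ᵥ κ *ᵥ θ - Fin.tail p ᵥ* κ ⬝ᵥ x := by
  rw [← Matrix.dotProduct_mulVec, ← dotProduct_sub]
  simp [dotProduct, Matrix.mulVec, Fin.sum_univ_succ, Fin.tail, sub_eq_add_neg]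

lemma vecMul_apply_nonpos_of_eq_zero {ι : Type*} [Fintype ι] {κ : Matrix ι ι ℝ}
    (hκ : ∀ i j, i ≠ j → κ i j ≤ 0) {v : ι → ℝ} (hv : ∀ i, 0 ≤ v i) {j : ι} (hj : v j = 0) :
    (v ᵥ* κ) j ≤ 0 :=
  Finset.sum_nonpos fun i _ => by
    rcases eq_or_ne i j with rfl | hij
    · simp [hj]
    · exact mul_nonpos_of_nonneg_of_nonpos (hv i) (hκ i j hij)

lemma forall_nonneg_smul_sub_vecMul_iff {ι : Type*} [Fintype ι] {κ : Matrix ι ι ℝ}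
    (hκ : ∀ i j, i ≠ j → κ i j ≤ 0) {v : ι → ℝ} (hv : ∀ i, 0 ≤ v i) {s : Finset ι}
    (hs : s.Nonempty) (hpos : ∀ j ∈ s, 0 < v j) (hzero : ∀ j ∉ s, v j = 0) (β : ℝ) :
    (∀ j, 0 ≤ (β • v - v ᵥ* κ) j) ↔ s.sup' hs (fun j => (v ᵥ* κ) j / v j) ≤ β := by
  simp only [Finset.sup'_le_iff, Pi.sub_apply, Pi.smul_apply, smul_eq_mul, sub_nonneg]
  refine ⟨fun h j hj => (div_le_iff₀ (hpos j hj)).2 (h j), fun h j => ?_⟩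
  by_cases hj : j ∈ s
  · exact (div_le_iff₀ (hpos j hj)).1 (h j hj)
  · simpa [hzero j hj] using vecMul_apply_nonpos_of_eq_zero hκ hv (hzero j hj)

/-- Proposition 6 of the paper: in the linear jump-diffusion model the
instantaneous dividend rate `D_t = e^{βt} pᵀ(β Id + G₁) H₁(X_t)` is non-negative on the
state space `(0,∞)^d` if and only if `β` exceeds the stated explicit lower bound. Here
`H₁(x) = (1, x₁, …, x_d)ᵀ` and `G₁ = [[0, 0], [κθ, -κ]]`. -/
theorem nonneg_dividend_rate_iff (d k : ℕ) (hk : 0 < k) (hkd : k ≤ d)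
    (κ : Matrix (Fin d) (Fin d) ℝ) (θ : Fin d → ℝ)
    (hκ : ∀ i j : Fin d, i ≠ j → κ i j ≤ 0)
    (hκθ : ∀ i, 0 ≤ κ.mulVec θ i)
    (p : Fin (d + 1) → ℝ) (hp : ∀ i, 0 ≤ p i)
    (hpos : ∀ j : Fin d, (j : ℕ) < k → 0 < p j.succ)
    (hzero : ∀ j : Fin d, k ≤ (j : ℕ) → p j.succ = 0)
    (β : ℝ)
    (G₁ : Matrix (Fin (d + 1)) (Fin (d + 1)) ℝ)
    (hG₁ : G₁ = Matrix.of (Fin.cons (fun _ => (0 : ℝ))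
      (fun i' : Fin d => Fin.cons (κ.mulVec θ i') (fun j' : Fin d => -κ i' j')))) :
    ((∀ x : Fin d → ℝ, (∀ i, 0 < x i) →
        0 ≤ p ⬝ᵥ ((β • (1 : Matrix (Fin (d + 1)) (Fin (d + 1)) ℝ) + G₁).mulVec
          (Fin.cons 1 x))) ↔
      (if p 0 = 0 then
          ((Finset.univ.filter fun j : Fin d => (j : ℕ) < k).sup'
            ⟨⟨0, lt_of_lt_of_le hk hkd⟩, by simp [hk]⟩
            (fun j => (∑ i, p i.succ * κ i j) / p j.succ)) ≤ β
        else
          max (-(∑ i : Fin d, p i.succ * κ.mulVec θ i) / p 0)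
            ((Finset.univ.filter fun j : Fin d => (j : ℕ) < k).sup'
              ⟨⟨0, lt_of_lt_of_le hk hkd⟩, by simp [hk]⟩
              (fun j => (∑ i, p i.succ * κ i j) / p j.succ)) ≤ β)) := by
  have hexpand : ∀ x : Fin d → ℝ,
      p ⬝ᵥ ((β • (1 : Matrix (Fin (d + 1)) (Fin (d + 1)) ℝ) + G₁).mulVec (Fin.cons 1 x))
        = (β * p 0 + Fin.tail p ⬝ᵥ κ *ᵥ θ) + (β • Fin.tail p - Fin.tail p ᵥ* κ) ⬝ᵥ x := by
    intro x
    rw [hG₁, Matrix.add_mulVec, dotProduct_add, Matrix.smul_mulVec, Matrix.one_mulVec,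
      dotProduct_smul, dotProduct_finCons, dotProduct_linearDrift_mulVec, sub_dotProduct,
      smul_dotProduct, smul_eq_mul, smul_eq_mul]
    ring
  have hcoeff := forall_nonneg_smul_sub_vecMul_iff (v := Fin.tail p)
    (s := Finset.univ.filter fun j : Fin d => (j : ℕ) < k) hκ (fun i => hp i.succ)
    ⟨⟨0, lt_of_lt_of_le hk hkd⟩, by simp [hk]⟩ (fun j hj => hpos j (Finset.mem_filter.1 hj).2)
    (fun j hj => hzero j (by simpa using hj)) β
  simp only [hexpand, forall_pos_nonneg_add_dotProduct_iff]
  rw [hcoeff]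
  split_ifs with hp0
  · have hconst : 0 ≤ Fin.tail p ⬝ᵥ κ *ᵥ θ :=
      Finset.sum_nonneg fun i _ => mul_nonneg (hp i.succ) (hκθ i)
    rw [hp0, mul_zero, zero_add]
    exact and_iff_right hconst
  · rw [max_le_iff, div_le_iff₀ ((hp 0).lt_of_ne' hp0), neg_le_iff_add_nonneg', add_comm]
    exact Iff.rfl
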